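/- arXiv:1806.06370 — 6 statements merged into one kernel-verified Lean document; each statement's English description precedes it below -/
import Mathlib

section
/- Let ψ : ℝ × [0,∞) → [0,∞) be a rate function such that for each a ≥ 0 the map x ↦ ψ(x,a) is continuous and strictly increasing, for each x the map z ↦ ψ(x,z) is measurable and locally integrable on [0,∞), and for every x the integral G(x) := ∫_0^∞ exp(−∫_0^a ψ(x,z) dz) da is finite. Let b < 0, ν > 0 and n ∈ ℕ. Then there exists a unique λ* > 0 solving the fixed point equation 1/λ* = ∫_0^∞ exp(−∫_0^a ψ((b/ν^{n+1})·λ*, z) dz) da. -/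
/-!
The mean inter-jump time `G x = ∫₀^∞ exp (-∫₀^a ψ(x,z) dz) da` at memory value `x` is
antitone in `x` because `ψ` is monotone in `x`, continuous by dominated convergence (with the
bounds `ψ(x₀ + 1, ·)` inside and `exp (-∫ ψ(x₀ - 1, ·))` outside), and positive as the integral
of an exponential. Since `b / ν ^ (n + 1) < 0`, `λ ↦ G (b / ν ^ (n + 1) * λ)` is then a
continuous, monotone, positive function on `(0, ∞)`, and such a function meets the strictly
decreasing hyperbola `λ ↦ 1 / λ` exactly once.
-/

open MeasureTheory Real Set Filter

theorem existsUnique_one_div_eq_of_monotoneOn {f : ℝ → ℝ} (hf : ContinuousOn f (Ioi 0))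
    (hmono : MonotoneOn f (Ioi 0)) (hpos : ∀ x ∈ Ioi 0, 0 < f x) :
    ∃! x, 0 < x ∧ 1 / x = f x := by
  set φ : ℝ → ℝ := fun x => 1 / x - f x
  have hφ_anti : StrictAntiOn φ (Ioi 0) := fun x hx y hy hxy => by
    have := one_div_lt_one_div_of_lt hx hxy
    have := hmono hx hy hxy.le
    simp only [φ]
    linarith
  set m := f 1
  have hm : 0 < m := hpos 1 (mem_Ioi.2 one_pos)
  -- `x₀ ≤ 1 ≤ x₁` gives `f x₀ ≤ m ≤ f x₁`, while `1 / x₀ = m + 1` and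
  -- `1 / x₁ = m / (m + 1)`.
  set x₀ := 1 / (m + 1)
  set x₁ := (m + 1) / m
  have hx₀ : 0 < x₀ := by positivity
  have hx₀_le : x₀ ≤ 1 := by rw [div_le_one (by positivity)]; linarith
  have hx₁_ge : 1 ≤ x₁ := by rw [le_div_iff₀ hm]; linarith
  have hφ₀ : 0 ≤ φ x₀ := by
    have := hmono hx₀ (mem_Ioi.2 one_pos) hx₀_le
    simp only [φ, x₀, one_div_one_div]
    linarith
  have hφ₁ : φ x₁ ≤ 0 := by
    have := hmono (mem_Ioi.2 one_pos) (mem_Ioi.2 (by positivity)) hx₁_ge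
    have : m / (m + 1) ≤ m := div_le_self hm.le (by linarith)
    simp only [φ, x₁, one_div_div]
    linarith
  have hIcc : Icc x₀ x₁ ⊆ Ioi 0 := fun x hx => hx₀.trans_le hx.1
  have hφ_cont : ContinuousOn φ (Icc x₀ x₁) :=
    ((continuousOn_const.div continuousOn_id fun _ hx => (mem_Ioi.1 hx).ne').sub hf).mono hIcc
  obtain ⟨x, hx, hφx⟩ :=
    intermediate_value_Icc' (hx₀_le.trans hx₁_ge) hφ_cont ⟨hφ₁, hφ₀⟩
  have hφ_zero : ∀ y, 1 / y = f y ↔ φ y = 0 := fun y => sub_eq_zero.symm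
  refine ⟨x, ⟨hIcc hx, (hφ_zero x).2 hφx⟩, fun y ⟨hy, hyx⟩ => ?_⟩
  exact hφ_anti.injOn hy (hIcc hx) (((hφ_zero y).1 hyx).trans hφx.symm)

section MeanInterjumpTime

variable {ψ : ℝ → ℝ → ℝ}

noncomputable def meanInterjumpTime (ψ : ℝ → ℝ → ℝ) (x : ℝ) : ℝ :=
  ∫ a in Ioi 0, exp (-∫ z in (0 : ℝ)..a, ψ x z)

theorem monotone_intervalIntegral_of_monotone
    (hmono : ∀ z, 0 ≤ z → Monotone fun x => ψ x z)
    (hint : ∀ x a, 0 ≤ a → IntegrableOn (ψ x) (Icc 0 a)) {a : ℝ} (ha : 0 ≤ a) :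
    Monotone fun x => ∫ z in (0 : ℝ)..a, ψ x z := fun x y hxy =>
  intervalIntegral.integral_mono_on ha
    ((intervalIntegrable_iff_integrableOn_Icc_of_le ha).2 (hint x a ha))
    ((intervalIntegrable_iff_integrableOn_Icc_of_le ha).2 (hint y a ha))
    fun z hz => hmono z hz.1 hxy

theorem continuous_intervalIntegral_of_monotone (hnonneg : ∀ x z, 0 ≤ z → 0 ≤ ψ x z)
    (hcont : ∀ z, 0 ≤ z → Continuous fun x => ψ x z)
    (hmono : ∀ z, 0 ≤ z → Monotone fun x => ψ x z)
    (hint : ∀ x a, 0 ≤ a → IntegrableOn (ψ x) (Icc 0 a)) {a : ℝ} (ha : 0 ≤ a) :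
    Continuous fun x => ∫ z in (0 : ℝ)..a, ψ x z := by
  refine continuous_iff_continuousAt.2 fun x₀ => ?_
  refine intervalIntegral.continuousAt_of_dominated_interval (bound := ψ (x₀ + 1)) ?_ ?_
    ((intervalIntegrable_iff_integrableOn_Icc_of_le ha).2 (hint (x₀ + 1) a ha)) ?_
  · refine Eventually.of_forall fun x => ?_
    rw [uIoc_of_le ha]
    exact (hint x a ha).aestronglyMeasurable.mono_set Ioc_subset_Icc_self
  · filter_upwards [Iic_mem_nhds (lt_add_one x₀)] with x hx
    refine Eventually.of_forall fun z hz => ?_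
    rw [uIoc_of_le ha] at hz
    rw [norm_of_nonneg (hnonneg x z hz.1.le)]
    exact hmono z hz.1.le hx
  · refine Eventually.of_forall fun z hz => ?_
    rw [uIoc_of_le ha] at hz
    exact (hcont z hz.1.le).continuousAt

theorem meanInterjumpTime_pos {x : ℝ}
    (hfin : IntegrableOn (fun a => exp (-∫ z in (0 : ℝ)..a, ψ x z)) (Ioi 0)) :
    0 < meanInterjumpTime ψ x :=
  have : NeZero (volume.restrict (Ioi (0 : ℝ))) := ⟨by simp⟩
  integral_exp_pos hfin

theorem antitone_meanInterjumpTime (hmono : ∀ z, 0 ≤ z → Monotone fun x => ψ x z)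
    (hint : ∀ x a, 0 ≤ a → IntegrableOn (ψ x) (Icc 0 a))
    (hfin : ∀ x, IntegrableOn (fun a => exp (-∫ z in (0 : ℝ)..a, ψ x z)) (Ioi 0)) :
    Antitone (meanInterjumpTime ψ) := fun x y hxy =>
  setIntegral_mono_on (hfin y) (hfin x) measurableSet_Ioi fun _ ha =>
    exp_le_exp.2 <| neg_le_neg <| monotone_intervalIntegral_of_monotone hmono hint ha.le hxy

theorem continuous_meanInterjumpTime (hnonneg : ∀ x z, 0 ≤ z → 0 ≤ ψ x z)
    (hcont : ∀ z, 0 ≤ z → Continuous fun x => ψ x z)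
    (hmono : ∀ z, 0 ≤ z → Monotone fun x => ψ x z)
    (hint : ∀ x a, 0 ≤ a → IntegrableOn (ψ x) (Icc 0 a))
    (hfin : ∀ x, IntegrableOn (fun a => exp (-∫ z in (0 : ℝ)..a, ψ x z)) (Ioi 0)) :
    Continuous (meanInterjumpTime ψ) := by
  refine continuous_iff_continuousAt.2 fun x₀ => ?_
  refine continuousAt_of_dominated (bound := fun a => exp (-∫ z in (0 : ℝ)..a, ψ (x₀ - 1) z))
    (Eventually.of_forall fun x => (hfin x).aestronglyMeasurable) ?_ (hfin (x₀ - 1)) ?_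
  · filter_upwards [Ici_mem_nhds (sub_one_lt x₀)] with x hx
    refine (ae_restrict_iff' measurableSet_Ioi).2 (Eventually.of_forall fun a ha => ?_)
    rw [norm_of_nonneg (exp_pos _).le]
    exact exp_le_exp.2 <| neg_le_neg <| monotone_intervalIntegral_of_monotone hmono hint ha.le hx
  · refine (ae_restrict_iff' measurableSet_Ioi).2 (Eventually.of_forall fun a ha => ?_)
    exact (continuous_exp.comp
      (continuous_intervalIntegral_of_monotone hnonneg hcont hmono hint ha.le).neg).continuousAt

end MeanInterjumpTime

theorem stmt0_general (ψ : ℝ → ℝ → ℝ)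
    (hψ_nonneg : ∀ x a, 0 ≤ a → 0 ≤ ψ x a)
    (hψ_cont : ∀ a, 0 ≤ a → Continuous fun x => ψ x a)
    (hψ_mono : ∀ a, 0 ≤ a → StrictMono fun x => ψ x a)
    (hψ_locint : ∀ x T, 0 ≤ T → IntegrableOn (ψ x) (Set.Icc 0 T))
    (hG_fin : ∀ x, IntegrableOn
        (fun a => Real.exp (-∫ z in (0:ℝ)..a, ψ x z)) (Set.Ioi 0))
    (b ν : ℝ) (hb : b < 0) (hν : 0 < ν) (n : ℕ) :
    ∃! lam : ℝ, 0 < lam ∧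
      1 / lam = ∫ a in Set.Ioi (0:ℝ),
        Real.exp (-∫ z in (0:ℝ)..a, ψ (b / ν ^ (n + 1) * lam) z) := by
  have hmono : ∀ a, 0 ≤ a → Monotone fun x => ψ x a := fun a ha => (hψ_mono a ha).monotone
  have hc : b / ν ^ (n + 1) < 0 := div_neg_of_neg_of_pos hb (pow_pos hν _)
  have hG_cont := continuous_meanInterjumpTime hψ_nonneg hψ_cont hmono hψ_locint hG_fin
  have hG_anti := antitone_meanInterjumpTime hmono hψ_locint hG_fin
  exact existsUnique_one_div_eq_of_monotoneOn
    (f := fun lam => meanInterjumpTime ψ (b / ν ^ (n + 1) * lam))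
    (hG_cont.comp (continuous_const_mul _)).continuousOn
    ((hG_anti.comp (strictAnti_mul_left hc).antitone).monotoneOn _)
    fun _ _ => meanInterjumpTime_pos (hG_fin _)

/-- For a rate function ψ(x,a), continuous and strictly increasing in x,
measurable and locally integrable in a, with finite integral
G(x) = ∫_0^∞ exp(−∫_0^a ψ(x,z) dz) da for every x, and for b < 0, ν > 0, n ∈ ℕ,
there exists a unique λ* > 0 solving
1/λ* = ∫_0^∞ exp(−∫_0^a ψ((b/ν^{n+1})·λ*, z) dz) da. -/
theorem stmt0 (ψ : ℝ → ℝ → ℝ)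
    (hψ_nonneg : ∀ x a, 0 ≤ a → 0 ≤ ψ x a)
    (hψ_cont : ∀ a, 0 ≤ a → Continuous fun x => ψ x a)
    (hψ_mono : ∀ a, 0 ≤ a → StrictMono fun x => ψ x a)
    (hψ_meas : ∀ x, Measurable (ψ x))
    (hψ_locint : ∀ x T, 0 ≤ T → IntegrableOn (ψ x) (Set.Icc 0 T))
    (hG_fin : ∀ x, IntegrableOn
        (fun a => Real.exp (-∫ z in (0:ℝ)..a, ψ x z)) (Set.Ioi 0))
    (b ν : ℝ) (hb : b < 0) (hν : 0 < ν) (n : ℕ) :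
    ∃! lam : ℝ, 0 < lam ∧
      1 / lam = ∫ a in Set.Ioi (0:ℝ),
        Real.exp (-∫ z in (0:ℝ)..a, ψ (b / ν ^ (n + 1) * lam) z) :=
  stmt0_general ψ hψ_nonneg hψ_cont hψ_mono hψ_locint hG_fin b ν hb hν n
end

section
/- Let f : ℝ → ℝ be continuous, nondecreasing, and bounded below by a constant m > 0, let H < 0 and δ > 0. Then there exists exactly one λ > 0 satisfying 1/λ = δ + 1/f(λ H). -/
open Function

/-! The equation says exactly that `λ` is a fixed point of `φ λ = 1 / (δ + 1 / f (λ H))`, and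
positivity of `λ` is then automatic. Since `H < 0` and `f` is nondecreasing and positive, `φ` is
continuous and antitone, so `λ ↦ λ - φ λ` is continuous and strictly increasing: it has exactly
one zero. -/

theorem Antitone.existsUnique_isFixedPt {g : ℝ → ℝ} (hg : Antitone g) (hc : Continuous g) :
    ∃! x, IsFixedPt g x := by
  have hmono : StrictMono (id - g) := strictMono_id.add_monotone hg.neg
  set r := |g 0|
  have hr : -r ≤ r := neg_le_self (abs_nonneg _)
  have hlow : -r - g (-r) ≤ 0 := by
    have := hg (neg_nonpos.2 (abs_nonneg (g 0)))
    linarith [neg_abs_le (g 0)]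
  have hhigh : 0 ≤ r - g r := by
    have := hg (abs_nonneg (g 0))
    linarith [le_abs_self (g 0)]
  obtain ⟨x, -, hx⟩ := intermediate_value_Icc hr (continuous_id.sub hc).continuousOn ⟨hlow, hhigh⟩
  refine ⟨x, (sub_eq_zero.1 hx).symm, fun y hy => hmono.injective ?_⟩
  simp only [hx, Pi.sub_apply, id, hy.eq, sub_self]

theorem Antitone.one_div_add_one_div {u : ℝ → ℝ} (hu : Antitone u) (hpos : ∀ x, 0 < u x)
    {δ : ℝ} (hδ : 0 ≤ δ) : Antitone fun x => 1 / (δ + 1 / u x) := by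
  intro a b hab
  have : 1 / u a ≤ 1 / u b := one_div_le_one_div_of_le (hpos b) (hu hab)
  exact one_div_le_one_div_of_le (by positivity [hpos a]) (by linarith)

theorem Continuous.one_div_add_one_div {u : ℝ → ℝ} (hu : Continuous u) (hpos : ∀ x, 0 < u x)
    {δ : ℝ} (hδ : 0 ≤ δ) : Continuous fun x => 1 / (δ + 1 / u x) :=
  continuous_const.div (continuous_const.add (continuous_const.div hu fun x => (hpos x).ne'))
    fun x => (by positivity [hpos x] : 0 < δ + 1 / u x).ne'

theorem pos_and_one_div_eq_iff {y c : ℝ} (hc : 0 < c) : 0 < y ∧ 1 / y = c ↔ 1 / c = y := by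
  constructor
  · rintro ⟨-, rfl⟩
    exact one_div_one_div y
  · rintro rfl
    exact ⟨one_div_pos.2 hc, one_div_one_div c⟩

/-- For f continuous, nondecreasing, bounded below by m > 0, H < 0 and
δ > 0, there is exactly one λ > 0 satisfying 1/λ = δ + 1/f(λH). -/
theorem stmt2 (f : ℝ → ℝ) (hf_cont : Continuous f) (hf_mono : Monotone f)
    (m : ℝ) (hm : 0 < m) (hf_lb : ∀ x, m ≤ f x)
    (H : ℝ) (hH : H < 0) (δ : ℝ) (hδ : 0 < δ) :
    ∃! lam : ℝ, 0 < lam ∧ 1 / lam = δ + 1 / f (lam * H) := by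
  have hpos : ∀ l, 0 < f (l * H) := fun l => hm.trans_le (hf_lb _)
  have hanti : Antitone fun l => f (l * H) :=
    hf_mono.comp_antitone fun _ _ hab => mul_le_mul_of_nonpos_right hab hH.le
  have hcont : Continuous fun l => f (l * H) := hf_cont.comp (continuous_mul_const H)
  rw [existsUnique_congr fun l => pos_and_one_div_eq_iff (by positivity [hpos l])]
  exact (hanti.one_div_add_one_div hpos hδ.le).existsUnique_isFixedPt
    (hcont.one_div_add_one_div hpos hδ.le)
end

section
/- Let δ > 0, let φ : [0,∞) → [0,∞) be continuous, let μ be a finite measure on [0,∞), and let p : [0,∞) → ℝ be locally bounded and measurable, satisfying the renewal equation p(t) = ∫_{[0,∞)} 1{a ≥ δ − t} exp(−∫_{max(δ−a,0)}^t φ(s) ds) dμ(a) + ∫_0^{max(t−δ,0)} φ(s) p(s) exp(−∫_{s+δ}^t φ(u) du) ds for all t ≥ 0. Then p is continuous on (δ, ∞) and continuously differentiable on (2δ, ∞), where it solves the delay differential equation p'(t) = −φ(t) p(t) + φ(t−δ) p(t−δ) for all t > 2δ. -/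
/-
For `t ≥ δ` the first term of the renewal equation no longer depends on `t` except through the
factor `exp (-Φ t)`, where `Φ` is a primitive of `φ`, and the exponential in the second term
factorises the same way. Hence on `[δ, ∞)`
  `p t = exp (-Φ t) * (M + ∫ s in 0..t - δ, φ s * exp (Φ (s + δ)) * p s)`
for a constant `M`. Local boundedness makes the integrand locally integrable, so the right-hand
side is continuous for `t > δ`; for `t > 2δ` the integrand is continuous at `t - δ`, and the
fundamental theorem of calculus together with the product rule gives the delay equation.
-/

open MeasureTheory Real Set Filter Topology

def IsRenewalSolution (δ : ℝ) (φ : ℝ → ℝ) (μ : Measure ℝ) (p : ℝ → ℝ) : Prop :=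
  ∀ t, 0 ≤ t →
    p t = (∫ a, (if δ - t ≤ a then exp (-∫ s in (max (δ - a) 0)..t, φ s) else 0) ∂μ)
      + ∫ s in (0:ℝ)..(max (t - δ) 0), φ s * p s * exp (-∫ u in (s + δ)..t, φ u)

theorem continuousAt_primitive_of_mem_Ioo {f : ℝ → ℝ} {a b x : ℝ}
    (hf : IntervalIntegrable f volume a b) (hx : x ∈ Ioo a b) :
    ContinuousAt (fun y => ∫ s in a..y, f s) x :=
  (intervalIntegral.continuousOn_primitive_interval' hf left_mem_uIcc).continuousAt <|
    mem_of_superset (Ioo_mem_nhds hx.1 hx.2) (Ioo_subset_Icc_self.trans Icc_subset_uIcc)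

theorem intervalIntegrable_continuous_mul_of_bounded {g f : ℝ → ℝ} {a b C : ℝ} (hab : a ≤ b)
    (hg : Continuous g) (hf : Measurable f) (hbound : ∀ t ∈ Icc a b, |f t| ≤ C) :
    IntervalIntegrable (fun s => g s * f s) volume a b := by
  rw [intervalIntegrable_iff_integrableOn_Icc_of_le hab]
  refine IntegrableOn.continuousOn_mul hg.continuousOn ?_ isCompact_Icc
  exact Measure.integrableOn_of_bounded measure_Icc_lt_top.ne hf.aestronglyMeasurable
    (ae_restrict_of_forall_mem measurableSet_Icc hbound)

theorem IsRenewalSolution.eq_exp_neg_mul {δ t : ℝ} {φ Φ p : ℝ → ℝ} {μ : Measure ℝ}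
    (hren : IsRenewalSolution δ φ μ p) (hμ : μ (Iio 0) = 0)
    (hΦ : ∀ a b, ∫ s in a..b, φ s = Φ b - Φ a) (hδ : 0 ≤ δ) (ht : δ ≤ t) :
    p t = exp (-Φ t) * ((∫ a, exp (Φ (max (δ - a) 0)) ∂μ)
      + ∫ s in (0:ℝ)..t - δ, φ s * exp (Φ (s + δ)) * p s) := by
  have hinitial : (∫ a, (if δ - t ≤ a then exp (-∫ s in (max (δ - a) 0)..t, φ s) else 0) ∂μ)
      = exp (-Φ t) * ∫ a, exp (Φ (max (δ - a) 0)) ∂μ := by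
    have hnonneg : ∀ᵐ a ∂μ, 0 ≤ a := measure_mono_null (fun a (ha : ¬0 ≤ a) => not_le.mp ha) hμ
    rw [← integral_const_mul]
    refine integral_congr_ae (hnonneg.mono fun a ha => ?_)
    dsimp only
    rw [if_pos (by linarith), hΦ, neg_sub, sub_eq_neg_add, exp_add]
  have hinput : (∫ s in (0:ℝ)..(max (t - δ) 0), φ s * p s * exp (-∫ u in (s + δ)..t, φ u))
      = exp (-Φ t) * ∫ s in (0:ℝ)..t - δ, φ s * exp (Φ (s + δ)) * p s := by
    rw [max_eq_left (by linarith), ← intervalIntegral.integral_const_mul]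
    refine intervalIntegral.integral_congr fun s _ => ?_
    rw [hΦ, neg_sub, sub_eq_neg_add, exp_add]
    ring
  rw [hren t (hδ.trans ht), hinitial, hinput, mul_add]

section IntegratedForm

variable {δ M : ℝ} {φ Φ g p : ℝ → ℝ}

theorem continuousOn_of_eq_exp_neg_mul (hΦ : Continuous Φ) (hg : Continuous g)
    (hp_meas : Measurable p) (hp_loc : ∀ T, 0 ≤ T → ∃ C, ∀ t ∈ Icc (0:ℝ) T, |p t| ≤ C)
    (hform : ∀ t, δ ≤ t → p t = exp (-Φ t) * (M + ∫ s in (0:ℝ)..t - δ, g s * p s)) :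
    ContinuousOn p (Ioi δ) := by
  intro t (ht : δ < t)
  obtain ⟨C, hC⟩ := hp_loc (t - δ + 1) (by linarith)
  have hint := intervalIntegrable_continuous_mul_of_bounded (by linarith) hg hp_meas hC
  have hprimitive : ContinuousAt (fun u => ∫ s in (0:ℝ)..u - δ, g s * p s) t :=
    (continuousAt_primitive_of_mem_Ioo hint ⟨by linarith, by linarith⟩).comp
      (continuousAt_id.sub continuousAt_const)
  have heq : (fun u => exp (-Φ u) * (M + ∫ s in (0:ℝ)..u - δ, g s * p s)) =ᶠ[𝓝 t] p :=
    eventually_of_mem (Ioi_mem_nhds ht) fun u hu => (hform u (le_of_lt hu)).symm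
  exact ((hΦ.neg.rexp.continuousAt.mul (continuousAt_const.add hprimitive)).congr
    heq).continuousWithinAt

theorem hasDerivAt_of_eq_exp_neg_mul (hδ : 0 ≤ δ) (hΦ : ∀ t, HasDerivAt Φ (φ t) t)
    (hg : Continuous g) (hp_meas : Measurable p)
    (hp_loc : ∀ T, 0 ≤ T → ∃ C, ∀ t ∈ Icc (0:ℝ) T, |p t| ≤ C)
    (hform : ∀ t, δ ≤ t → p t = exp (-Φ t) * (M + ∫ s in (0:ℝ)..t - δ, g s * p s))
    {t : ℝ} (ht : 2 * δ < t) :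
    HasDerivAt p (-φ t * p t + exp (-Φ t) * (g (t - δ) * p (t - δ))) t := by
  have hΦc : Continuous Φ := continuous_iff_continuousAt.mpr fun t => (hΦ t).continuousAt
  have hp_cont := continuousOn_of_eq_exp_neg_mul hΦc hg hp_meas hp_loc hform
  obtain ⟨C, hC⟩ := hp_loc (t - δ) (by linarith)
  have hint := intervalIntegrable_continuous_mul_of_bounded (by linarith) hg hp_meas hC
  have hprimitive : HasDerivAt (fun u => ∫ s in (0:ℝ)..u - δ, g s * p s)
      (g (t - δ) * p (t - δ)) t := by
    have hFTC := intervalIntegral.integral_hasDerivAt_right hint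
      (hg.measurable.mul hp_meas).stronglyMeasurable.stronglyMeasurableAtFilter
      (hg.continuousAt.mul (hp_cont.continuousAt (Ioi_mem_nhds (by linarith))))
    simpa using hFTC.comp_sub_const t δ
  have heq : p =ᶠ[𝓝 t] fun u => exp (-Φ u) * (M + ∫ s in (0:ℝ)..u - δ, g s * p s) :=
    eventually_of_mem (Ioi_mem_nhds (by linarith : δ < t)) fun u hu => hform u (le_of_lt hu)
  refine (((hΦ t).neg.exp.mul (hprimitive.const_add M)).congr_of_eventuallyEq heq).congr_deriv ?_
  rw [hform t (by linarith), Pi.neg_apply]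
  ring

end IntegratedForm

theorem stmt3_general (δ : ℝ) (hδ : 0 < δ) (φ : ℝ → ℝ) (hφ_cont : Continuous φ)
    (μ : Measure ℝ) (hμ : μ (Set.Iio 0) = 0)
    (p : ℝ → ℝ) (hp_meas : Measurable p)
    (hp_loc : ∀ T, 0 ≤ T → ∃ C, ∀ t ∈ Set.Icc (0:ℝ) T, |p t| ≤ C)
    (hren : ∀ t, 0 ≤ t →
      p t = (∫ a, (if δ - t ≤ a then
                Real.exp (-∫ s in (max (δ - a) 0)..t, φ s) else 0) ∂μ)
          + ∫ s in (0:ℝ)..(max (t - δ) 0),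
              φ s * p s * Real.exp (-∫ u in (s + δ)..t, φ u)) :
    ContinuousOn p (Set.Ioi δ) ∧
    (∀ t, 2 * δ < t →
      HasDerivAt p (-(φ t) * p t + φ (t - δ) * p (t - δ)) t) ∧
    ContinuousOn (deriv p) (Set.Ioi (2 * δ)) := by
  set Φ : ℝ → ℝ := fun t => ∫ s in (0:ℝ)..t, φ s
  have hΦ : ∀ t, HasDerivAt Φ (φ t) t := fun t =>
    (hφ_cont.integral_hasStrictDerivAt 0 t).hasDerivAt
  have hΦ_sub : ∀ a b, ∫ s in a..b, φ s = Φ b - Φ a := fun a b =>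
    (intervalIntegral.integral_interval_sub_left
      (hφ_cont.intervalIntegrable 0 b) (hφ_cont.intervalIntegrable 0 a)).symm
  have hΦc : Continuous Φ := continuous_iff_continuousAt.mpr fun t => (hΦ t).continuousAt
  have hg : Continuous fun s => φ s * exp (Φ (s + δ)) := by fun_prop
  have hform := fun t => IsRenewalSolution.eq_exp_neg_mul hren hμ hΦ_sub hδ.le (t := t)
  have hp_cont := continuousOn_of_eq_exp_neg_mul hΦc hg hp_meas hp_loc hform
  have hderiv : ∀ t, 2 * δ < t → HasDerivAt p (-(φ t) * p t + φ (t - δ) * p (t - δ)) t := by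
    intro t ht
    convert hasDerivAt_of_eq_exp_neg_mul hδ.le hΦ hg hp_meas hp_loc hform ht using 2
    rw [sub_add_cancel, exp_neg]
    field_simp
  refine ⟨hp_cont, hderiv, ContinuousOn.congr ?_ fun t ht => (hderiv t ht).deriv⟩
  have hshift : MapsTo (fun t => t - δ) (Ioi (2 * δ)) (Ioi δ) :=
    fun t (ht : 2 * δ < t) => show δ < t - δ by linarith
  exact (hφ_cont.continuousOn.neg.mul (hp_cont.mono (Ioi_subset_Ioi (by linarith)))).add
    ((hφ_cont.comp_continuousOn (continuousOn_id.sub continuousOn_const)).mul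
      (hp_cont.comp (continuousOn_id.sub continuousOn_const) hshift))

/-- Any locally bounded measurable solution p of the renewal equation
p(t) = ∫ 1{a ≥ δ−t} exp(−∫_{max(δ−a,0)}^t φ(s) ds) dμ(a)
       + ∫_0^{max(t−δ,0)} φ(s) p(s) exp(−∫_{s+δ}^t φ(u) du) ds
is continuous on (δ,∞) and continuously differentiable on (2δ,∞), where it solves the
delay differential equation p'(t) = −φ(t)p(t) + φ(t−δ)p(t−δ). -/
theorem stmt3 (δ : ℝ) (hδ : 0 < δ) (φ : ℝ → ℝ) (hφ_cont : Continuous φ)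
    (hφ_nonneg : ∀ t, 0 ≤ t → 0 ≤ φ t)
    (μ : Measure ℝ) [IsFiniteMeasure μ] (hμ : μ (Set.Iio 0) = 0)
    (p : ℝ → ℝ) (hp_meas : Measurable p)
    (hp_loc : ∀ T, 0 ≤ T → ∃ C, ∀ t ∈ Set.Icc (0:ℝ) T, |p t| ≤ C)
    (hren : ∀ t, 0 ≤ t →
      p t = (∫ a, (if δ - t ≤ a then
                Real.exp (-∫ s in (max (δ - a) 0)..t, φ s) else 0) ∂μ)
          + ∫ s in (0:ℝ)..(max (t - δ) 0),
              φ s * p s * Real.exp (-∫ u in (s + δ)..t, φ u)) :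
    ContinuousOn p (Set.Ioi δ) ∧
    (∀ t, 2 * δ < t →
      HasDerivAt p (-(φ t) * p t + φ (t - δ) * p (t - δ)) t) ∧
    ContinuousOn (deriv p) (Set.Ioi (2 * δ)) :=
  stmt3_general δ hδ φ hφ_cont μ hμ p hp_meas hp_loc hren
end

section
/- Let δ > 0, let φ : [0,∞) → [0,∞) be continuous, let μ be a finite measure on [0,∞) having a continuous nonnegative density π₀ with respect to Lebesgue measure, and let p : [0,∞) → ℝ be locally bounded and measurable, satisfying the renewal equation p(t) = ∫_{[0,∞)} 1{a ≥ δ − t} exp(−∫_{max(δ−a,0)}^t φ(s) ds) dμ(a) + ∫_0^{max(t−δ,0)} φ(s) p(s) exp(−∫_{s+δ}^t φ(u) du) ds for all t ≥ 0. Then p is continuous on all of [0,∞); it is continuously differentiable on (0,δ) with p'(t) = π₀(δ−t) − φ(t) p(t) there; it is continuously differentiable on (δ,∞) with p'(t) = −φ(t) p(t) + φ(t−δ) p(t−δ) there; and at t = δ the one-sided derivatives are p'(δ−) = π₀(0) − φ(δ) p(δ) and p'(δ+) = −φ(δ) p(δ) + φ(0) p(0). -/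
/-!
With the cumulative hazard Φ(t) = ∫₀ᵗ φ, the substitution u = δ - a in the initial-age term and
∫_{s+δ}^t φ = Φ(t) - Φ(s+δ) in the renewal term put the equation in the form
  e^{Φ(t)} p(t) = N(min t δ) + H(max (t - δ) 0),
with N(x) = ∫_{a>δ} π₀ + ∫₀ˣ e^{Φ(u)} π₀(δ - u) du (`initialTerm`) and
H(x) = ∫₀ˣ φ(s) p(s) e^{Φ(s+δ)} ds (`renewalTerm`).
Local boundedness of p makes H continuous, so p is continuous; then the integrand of H is
continuous too, and the fundamental theorem of calculus differentiates N on [0, δ] and H(· - δ)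
on [δ, ∞).
-/

open MeasureTheory Real Set

noncomputable def cumHazard (φ : ℝ → ℝ) (t : ℝ) : ℝ := ∫ s in (0:ℝ)..t, φ s

noncomputable def initialTerm (δ : ℝ) (φ π₀ : ℝ → ℝ) (x : ℝ) : ℝ :=
  (∫ a in Ioi δ, π₀ a) + ∫ u in (0:ℝ)..x, exp (cumHazard φ u) * π₀ (δ - u)

noncomputable def renewalTerm (δ : ℝ) (φ p : ℝ → ℝ) (x : ℝ) : ℝ :=
  ∫ s in (0:ℝ)..x, φ s * p s * exp (cumHazard φ (s + δ))

section Calculus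

variable {φ : ℝ → ℝ}

lemma cumHazard_sub (hφ : Continuous φ) (a b : ℝ) :
    ∫ s in a..b, φ s = cumHazard φ b - cumHazard φ a :=
  (intervalIntegral.integral_interval_sub_left (hφ.intervalIntegrable _ _)
    (hφ.intervalIntegrable _ _)).symm

lemma hasDerivAt_cumHazard (hφ : Continuous φ) (t : ℝ) : HasDerivAt (cumHazard φ) (φ t) t :=
  (hφ.integral_hasStrictDerivAt 0 t).hasDerivAt

lemma continuous_cumHazard (hφ : Continuous φ) : Continuous (cumHazard φ) :=
  continuous_iff_continuousAt.2 fun t => (hasDerivAt_cumHazard hφ t).continuousAt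

lemma monotoneOn_cumHazard (hφ : Continuous φ) (hφ0 : ∀ t, 0 ≤ t → 0 ≤ φ t) :
    MonotoneOn (cumHazard φ) (Ici 0) := by
  intro x (hx : 0 ≤ x) y _ hxy
  have : 0 ≤ ∫ s in x..y, φ s :=
    intervalIntegral.integral_nonneg hxy fun s hs => hφ0 s (hx.trans hs.1)
  linarith [cumHazard_sub hφ x y]

lemma hasDerivWithinAt_of_eqOn_exp_neg_mul {Λ q p : ℝ → ℝ} {s : Set ℝ} {t l r : ℝ}
    (hΛ : HasDerivAt Λ l t) (hq : HasDerivWithinAt q (exp (Λ t) * r) s t)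
    (hp : EqOn p (fun y => exp (-Λ y) * q y) s) (ht : t ∈ s) :
    HasDerivWithinAt p (r - l * p t) s t := by
  refine ((hΛ.neg.exp.hasDerivWithinAt.mul hq).congr hp (hp ht)).congr_deriv ?_
  have hexp : exp (-Λ t) * exp (Λ t) = 1 := by rw [← exp_add, neg_add_cancel, exp_zero]
  rw [hp ht, Pi.neg_apply]
  linear_combination r * hexp

lemma continuousOn_primitive_Ici {g : ℝ → ℝ}
    (hg : ∀ T, 0 ≤ T → IntervalIntegrable g volume 0 T) :
    ContinuousOn (fun x => ∫ s in (0:ℝ)..x, g s) (Ici 0) := by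
  intro x (hx : 0 ≤ x)
  have hx1 : 0 ≤ x + 1 := by linarith
  have h := intervalIntegral.continuousOn_primitive_interval' (hg (x + 1) hx1) left_mem_uIcc
  rw [uIcc_of_le hx1] at h
  refine (h x ⟨hx, by linarith⟩).mono_of_mem_nhdsWithin ?_
  exact Filter.mem_of_superset (inter_mem_nhdsWithin _ (Iio_mem_nhds (lt_add_one x)))
    fun y hy => ⟨hy.1, hy.2.le⟩

lemma hasDerivWithinAt_primitive_Ici {g : ℝ → ℝ} (hg : ContinuousOn g (Ici 0)) {x : ℝ}
    (hx : 0 ≤ x) : HasDerivWithinAt (fun y => ∫ s in (0:ℝ)..y, g s) (g x) (Ici 0) x := by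
  have hIcc : ContinuousOn g (Icc 0 (x + 1)) := hg.mono Icc_subset_Ici_self
  have hmem : Fact (x ∈ Icc 0 (x + 1)) := ⟨⟨hx, by linarith⟩⟩
  have h := intervalIntegral.integral_hasDerivWithinAt_right (s := Icc 0 (x + 1))
    ((hIcc.mono (Icc_subset_Icc_right (by linarith))).intervalIntegrable_of_Icc hx)
    (hIcc.stronglyMeasurableAtFilter_nhdsWithin measurableSet_Icc x) (hIcc x hmem.out)
  rw [← Ici_inter_Iic] at h
  exact (hasDerivWithinAt_inter (Iic_mem_nhds (lt_add_one x))).1 h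

lemma intervalIntegrable_mul_of_bounded {f p : ℝ → ℝ} {T C : ℝ} (hf : Continuous f)
    (hp : Measurable p) (hT : 0 ≤ T) (hC : ∀ t ∈ Icc 0 T, |p t| ≤ C) :
    IntervalIntegrable (fun s => p s * f s) volume 0 T := by
  rw [intervalIntegrable_iff_integrableOn_Icc_of_le hT]
  exact hf.integrableOn_Icc.bdd_mul hp.aestronglyMeasurable
    ((ae_restrict_iff' measurableSet_Icc).2 (.of_forall hC))

end Calculus

section Density

variable {α : Type*} [MeasurableSpace α] {ν : Measure α} {f : α → ℝ}

lemma integral_withDensity_ofReal (hf : Measurable f) (hf0 : ∀ a, 0 ≤ f a) (g : α → ℝ) :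
    ∫ a, g a ∂ν.withDensity (fun a => ENNReal.ofReal (f a)) = ∫ a, f a * g a ∂ν := by
  rw [show (fun a => ENNReal.ofReal (f a)) = fun a => ((f a).toNNReal : ENNReal) from rfl,
    integral_withDensity_eq_integral_smul hf.real_toNNReal]
  simp only [NNReal.smul_def, Real.coe_toNNReal _ (hf0 _), smul_eq_mul]

lemma integrable_of_isFiniteMeasure_withDensity_ofReal (hf : Measurable f) (hf0 : ∀ a, 0 ≤ f a)
    [IsFiniteMeasure (ν.withDensity fun a => ENNReal.ofReal (f a))] : Integrable f ν := by
  have h : ∫⁻ a, ENNReal.ofReal (f a) ∂ν ≠ ⊤ := by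
    simpa [withDensity_apply _ MeasurableSet.univ] using
      measure_ne_top (ν.withDensity fun a => ENNReal.ofReal (f a)) univ
  exact (integrable_toReal_of_lintegral_ne_top hf.ennreal_ofReal.aemeasurable h).congr
    (.of_forall fun a => ENNReal.toReal_ofReal (hf0 a))

end Density

section Renewal

variable {δ : ℝ} {φ π₀ p : ℝ → ℝ}

lemma mul_survival_eq_indicator (hφ : Continuous φ) {t a : ℝ} (ha : 0 ≤ a) :
    π₀ a * (if δ - t ≤ a then exp (-∫ s in (max (δ - a) 0)..t, φ s) else 0) =
      (Ici (max (δ - t) 0)).indicator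
        (fun b => exp (-cumHazard φ t) * (π₀ b * exp (cumHazard φ (max (δ - b) 0)))) a := by
  by_cases h : δ - t ≤ a
  · rw [if_pos h, indicator_of_mem (show a ∈ Ici _ from max_le h ha), cumHazard_sub hφ, neg_sub,
      exp_sub, exp_neg]
    ring
  · rw [if_neg h, mul_zero,
      indicator_of_notMem (show a ∉ Ici _ from fun hm => h (le_of_max_le_left hm))]

lemma integrableOn_survival (hδ : 0 ≤ δ) (hφ : Continuous φ) (hφ0 : ∀ t, 0 ≤ t → 0 ≤ φ t)
    (hπ : IntegrableOn π₀ (Ioi 0)) :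
    IntegrableOn (fun a => π₀ a * exp (cumHazard φ (max (δ - a) 0))) (Ioi 0) := by
  refine hπ.mul_bdd (c := exp (cumHazard φ δ)) ?_ ((ae_restrict_iff' measurableSet_Ioi).2 ?_)
  · exact ((continuous_cumHazard hφ).comp
      ((continuous_const.sub continuous_id).max continuous_const)).rexp.aestronglyMeasurable
  · refine .of_forall fun a (ha : 0 < a) => ?_
    rw [norm_of_nonneg (exp_pos _).le, exp_le_exp]
    exact monotoneOn_cumHazard hφ hφ0 (mem_Ici.2 (le_max_right _ _)) hδ (max_le (by linarith) hδ)

lemma setIntegral_mul_survival_eq (hδ : 0 ≤ δ) (hφ : Continuous φ) (hφ0 : ∀ t, 0 ≤ t → 0 ≤ φ t)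
    (hπ : IntegrableOn π₀ (Ici 0)) {t : ℝ} (ht : 0 ≤ t) :
    ∫ a in Ici 0, π₀ a * (if δ - t ≤ a then exp (-∫ s in (max (δ - a) 0)..t, φ s) else 0) =
      exp (-cumHazard φ t) * initialTerm δ φ π₀ (min t δ) := by
  set m := max (δ - t) 0 with hm
  set F := fun a => π₀ a * exp (cumHazard φ (max (δ - a) 0))
  have hm0 : 0 ≤ m := le_max_right _ _
  have hmδ : m ≤ δ := max_le (by linarith) hδ
  have hF : IntegrableOn F (Ioi 0) :=
    integrableOn_survival hδ hφ hφ0 (hπ.mono_set Ioi_subset_Ici_self)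
  have hF_Ioi : ∫ a in Ioi δ, F a = ∫ a in Ioi δ, π₀ a := by
    refine setIntegral_congr_fun measurableSet_Ioi fun a (ha : δ < a) => ?_
    simp [F, cumHazard, max_eq_right (sub_nonpos.2 ha.le)]
  have hF_interval :
      ∫ a in m..δ, F a = ∫ u in (0:ℝ)..min t δ, exp (cumHazard φ u) * π₀ (δ - u) := by
    have hδm : δ - m = min t δ := by
      rw [hm, ← min_sub_sub_left, sub_sub_cancel, sub_zero]
    rw [intervalIntegral.integral_congr
        (g := fun a => (fun u => exp (cumHazard φ u) * π₀ (δ - u)) (δ - a)),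
      intervalIntegral.integral_comp_sub_left (fun u => exp (cumHazard φ u) * π₀ (δ - u)),
      sub_self, hδm]
    intro a ha
    rw [uIcc_of_le hmδ] at ha
    simp only [F, max_eq_left (sub_nonneg.2 ha.2), sub_sub_cancel, mul_comm]
  calc _ = ∫ a in Ici 0, (Ici m).indicator (fun a => exp (-cumHazard φ t) * F a) a :=
        setIntegral_congr_fun measurableSet_Ici fun a ha => mul_survival_eq_indicator hφ ha
    _ = exp (-cumHazard φ t) * ∫ a in Ioi m, F a := by
        rw [setIntegral_indicator measurableSet_Ici, Ici_inter_Ici, max_eq_right hm0,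
          integral_Ici_eq_integral_Ioi, integral_const_mul]
    _ = _ := by
        rw [← intervalIntegral.integral_interval_add_Ioi (hF.mono_set (Ioi_subset_Ioi hm0))
          (hF.mono_set (Ioi_subset_Ioi hδ)), hF_interval, hF_Ioi, initialTerm, add_comm]

lemma integral_renewal_eq (hφ : Continuous φ) (t x : ℝ) :
    ∫ s in (0:ℝ)..x, φ s * p s * exp (-∫ u in (s + δ)..t, φ u) =
      exp (-cumHazard φ t) * renewalTerm δ φ p x := by
  rw [renewalTerm, ← intervalIntegral.integral_const_mul]
  congr 1
  funext s
  rw [cumHazard_sub hφ, neg_sub, exp_sub, exp_neg]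
  ring

end Renewal

section Regularity

variable {δ : ℝ} {φ π₀ p : ℝ → ℝ}

lemma hasDerivAt_initialTerm (hφ : Continuous φ) (hπ₀ : Continuous π₀) (x : ℝ) :
    HasDerivAt (initialTerm δ φ π₀) (exp (cumHazard φ x) * π₀ (δ - x)) x :=
  ((((continuous_cumHazard hφ).rexp.mul (hπ₀.comp (continuous_const.sub continuous_id))
    ).integral_hasStrictDerivAt 0 x).hasDerivAt).const_add _

lemma continuousOn_renewalTerm (hφ : Continuous φ) (hp : Measurable p)
    (hp_loc : ∀ T, 0 ≤ T → ∃ C, ∀ t ∈ Icc (0:ℝ) T, |p t| ≤ C) :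
    ContinuousOn (renewalTerm δ φ p) (Ici 0) := by
  refine continuousOn_primitive_Ici fun T hT => ?_
  obtain ⟨C, hC⟩ := hp_loc T hT
  have hf : Continuous fun s => φ s * exp (cumHazard φ (s + δ)) :=
    hφ.mul ((continuous_cumHazard hφ).comp (continuous_add_const δ)).rexp
  convert intervalIntegrable_mul_of_bounded hf hp hT hC using 2 with s
  ring

lemma continuous_initialTerm (hφ : Continuous φ) (hπ₀ : Continuous π₀) :
    Continuous (initialTerm δ φ π₀) :=
  continuous_iff_continuousAt.2 fun x => (hasDerivAt_initialTerm hφ hπ₀ x).continuousAt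

lemma continuousOn_of_eq_exp_neg_mul_s4 (hφ : Continuous φ) (hπ₀ : Continuous π₀)
    (hH : ContinuousOn (renewalTerm δ φ p) (Ici 0))
    (hp : ∀ t, 0 ≤ t → p t = exp (-cumHazard φ t) *
      (initialTerm δ φ π₀ (min t δ) + renewalTerm δ φ p (max (t - δ) 0))) :
    ContinuousOn p (Ici 0) := by
  refine ContinuousOn.congr ?_ fun t ht => hp t ht
  refine (continuous_cumHazard hφ).neg.rexp.continuousOn.mul (ContinuousOn.add ?_ ?_)
  · exact ((continuous_initialTerm hφ hπ₀).comp (continuous_id.min continuous_const)).continuousOn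
  · exact hH.comp ((continuous_id.sub continuous_const).max continuous_const).continuousOn
      fun _ _ => mem_Ici.2 (le_max_right _ _)

lemma hasDerivWithinAt_Icc_of_eqOn (hφ : Continuous φ) (hπ₀ : Continuous π₀)
    (hp : EqOn p (fun y => exp (-cumHazard φ y) * initialTerm δ φ π₀ y) (Icc 0 δ)) :
    ∀ t ∈ Icc 0 δ, HasDerivWithinAt p (π₀ (δ - t) - φ t * p t) (Icc 0 δ) t := fun t ht =>
  hasDerivWithinAt_of_eqOn_exp_neg_mul (hasDerivAt_cumHazard hφ t)
    (hasDerivAt_initialTerm hφ hπ₀ t).hasDerivWithinAt hp ht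

lemma hasDerivWithinAt_Ici_of_eqOn (hφ : Continuous φ) (hpc : ContinuousOn p (Ici 0)) {c : ℝ}
    (hp : EqOn p (fun y => exp (-cumHazard φ y) * (c + renewalTerm δ φ p (y - δ))) (Ici δ)) :
    ∀ t, δ ≤ t → HasDerivWithinAt p (-(φ t) * p t + φ (t - δ) * p (t - δ)) (Ici δ) t := by
  intro t ht
  have hg : ContinuousOn (fun s => φ s * p s * exp (cumHazard φ (s + δ))) (Ici 0) :=
    (hφ.continuousOn.mul hpc).mul ((continuous_cumHazard hφ).comp
      (continuous_add_const δ)).rexp.continuousOn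
  have hshift : HasDerivWithinAt (fun y => renewalTerm δ φ p (y - δ))
      (exp (cumHazard φ t) * (φ (t - δ) * p (t - δ))) (Ici δ) t := by
    have h := (hasDerivWithinAt_primitive_Ici hg (sub_nonneg.2 ht)).comp t
      (((hasDerivAt_id t).sub_const δ).hasDerivWithinAt (s := Ici δ))
      fun y (hy : y ∈ Ici δ) => sub_nonneg.2 hy
    rw [mul_one, sub_add_cancel] at h
    exact h.congr_deriv (mul_comm _ _)
  exact (hasDerivWithinAt_of_eqOn_exp_neg_mul (hasDerivAt_cumHazard hφ t)
    (hshift.const_add c) hp ht).congr_deriv (by ring)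

end Regularity

/-- If the initial law μ has a continuous nonnegative density π₀ with respect
to Lebesgue measure on [0,∞), then any locally bounded measurable solution p of the
renewal equation is continuous on [0,∞), C¹ on (0,δ) with
p'(t) = π₀(δ−t) − φ(t)p(t), C¹ on (δ,∞) with p'(t) = −φ(t)p(t) + φ(t−δ)p(t−δ),
and at t = δ, the one-sided derivatives are p'(δ−) = π₀(0) − φ(δ)p(δ) and
p'(δ+) = −φ(δ)p(δ) + φ(0)p(0). -/
theorem stmt4 (δ : ℝ) (hδ : 0 < δ) (φ : ℝ → ℝ) (hφ_cont : Continuous φ)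
    (hφ_nonneg : ∀ t, 0 ≤ t → 0 ≤ φ t)
    (π₀ : ℝ → ℝ) (hπ₀_cont : Continuous π₀) (hπ₀_nonneg : ∀ a, 0 ≤ π₀ a)
    (μ : Measure ℝ) [IsFiniteMeasure μ]
    (hμ : μ = (volume.restrict (Set.Ici 0)).withDensity
        (fun a => ENNReal.ofReal (π₀ a)))
    (p : ℝ → ℝ) (hp_meas : Measurable p)
    (hp_loc : ∀ T, 0 ≤ T → ∃ C, ∀ t ∈ Set.Icc (0:ℝ) T, |p t| ≤ C)
    (hren : ∀ t, 0 ≤ t →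
      p t = (∫ a, (if δ - t ≤ a then
                Real.exp (-∫ s in (max (δ - a) 0)..t, φ s) else 0) ∂μ)
          + ∫ s in (0:ℝ)..(max (t - δ) 0),
              φ s * p s * Real.exp (-∫ u in (s + δ)..t, φ u)) :
    ContinuousOn p (Set.Ici 0) ∧
    (∀ t ∈ Set.Ioo (0:ℝ) δ,
      HasDerivAt p (π₀ (δ - t) - φ t * p t) t) ∧
    (∀ t, δ < t →
      HasDerivAt p (-(φ t) * p t + φ (t - δ) * p (t - δ)) t) ∧
    HasDerivWithinAt p (π₀ 0 - φ δ * p δ) (Set.Iic δ) δ ∧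
    HasDerivWithinAt p (-(φ δ) * p δ + φ 0 * p 0) (Set.Ici δ) δ := by
  subst hμ
  have hπ : IntegrableOn π₀ (Ici 0) :=
    integrable_of_isFiniteMeasure_withDensity_ofReal hπ₀_cont.measurable hπ₀_nonneg
  have hkey : ∀ t, 0 ≤ t → p t = exp (-cumHazard φ t) *
      (initialTerm δ φ π₀ (min t δ) + renewalTerm δ φ p (max (t - δ) 0)) := fun t ht => by
    rw [hren t ht, integral_withDensity_ofReal hπ₀_cont.measurable hπ₀_nonneg,
      setIntegral_mul_survival_eq hδ.le hφ_cont hφ_nonneg hπ ht, integral_renewal_eq hφ_cont,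
      mul_add]
  have hcont : ContinuousOn p (Ici 0) := continuousOn_of_eq_exp_neg_mul_s4 hφ_cont hπ₀_cont
    (continuousOn_renewalTerm hφ_cont hp_meas hp_loc) hkey
  have hleft := hasDerivWithinAt_Icc_of_eqOn (p := p) hφ_cont hπ₀_cont fun y hy => by
    rw [hkey y hy.1, min_eq_left hy.2, max_eq_right (sub_nonpos.2 hy.2), renewalTerm,
      intervalIntegral.integral_same, add_zero]
  have hright := hasDerivWithinAt_Ici_of_eqOn hφ_cont hcont fun y (hy : δ ≤ y) => by
    rw [hkey y (hδ.le.trans hy), min_eq_right hy, max_eq_left (sub_nonneg.2 hy)]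
  refine ⟨hcont,
    fun t ht => (hleft t (Ioo_subset_Icc_self ht)).hasDerivAt (Icc_mem_nhds ht.1 ht.2),
    fun t ht => (hright t ht.le).hasDerivAt (Ici_mem_nhds ht), ?_, by simpa using hright δ le_rfl⟩
  rw [← hasDerivWithinAt_inter (Ici_mem_nhds hδ), Iic_inter_Ici]
  simpa using hleft δ ⟨hδ.le, le_rfl⟩
end

section
/- Let T ≥ 0, let h : [0,∞) → [0,∞) be locally integrable, let g : [0,∞) → [0,∞) be locally bounded, and suppose b > 0 satisfies ∫_0^T h(s)·1{h(s) ≥ b} ds < 1/2. If u : [0,∞) → [0,∞) is locally bounded and satisfies u(t) ≤ g(t) + ∫_0^t h(t−s) u(s) ds for all t ∈ [0,T], then sup_{t ≤ T} u(t) ≤ 2 e^{2bT} · sup_{t ≤ T} g(t). -/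
/-!
Let `c = h · 1{h ≥ b}`, so that `h ≤ b + c`. For the running supremum `U t = sup_{s ≤ t} u s`
this gives `U t ≤ G + b ∫₀ᵗ U + (∫₀ᵀ c) U t` with `G = sup_{[0,T]} g`, and since `∫₀ᵀ c < 1/2`
the last term is absorbed: `U t ≤ 2G + 2b ∫₀ᵗ U`. The linear Grönwall inequality, proved by
Picard iteration starting from the a priori bound `U ≤ U T`, then yields `U t ≤ 2G e^{2bt}`.
-/

open MeasureTheory Real Set intervalIntegral Filter Topology
open scoped Nat

section Gronwall

variable {a c C T : ℝ} {U : ℝ → ℝ}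

lemma hasDerivAt_mul_exp_add_mul_pow_div_factorial (a c C : ℝ) (n : ℕ) (s : ℝ) :
    HasDerivAt (fun s => a * exp (c * s) + C * ((c * s) ^ (n + 1) / (n + 1)!))
      (c * (a * exp (c * s) + C * ((c * s) ^ n / n !))) s := by
  have hlin : HasDerivAt (fun s => c * s) c s := by simpa using (hasDerivAt_id s).const_mul c
  refine ((hlin.exp.const_mul a).fun_add
    (((hlin.fun_pow (n + 1)).div_const ((n + 1)! : ℝ)).const_mul C)).congr_deriv ?_
  push_cast [Nat.factorial_succ, Nat.add_sub_cancel]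
  field_simp

lemma const_add_mul_integral_mul_exp_add_mul_pow_div_factorial (a c C t : ℝ) (n : ℕ) :
    a + c * ∫ s in (0 : ℝ)..t, (a * exp (c * s) + C * ((c * s) ^ n / n !)) =
      a * exp (c * t) + C * ((c * t) ^ (n + 1) / (n + 1)!) := by
  rw [← intervalIntegral.integral_const_mul, integral_eq_sub_of_hasDerivAt
    (fun s _ => hasDerivAt_mul_exp_add_mul_pow_div_factorial a c C n s)
    (Continuous.intervalIntegrable (by fun_prop) _ _)]
  simp

theorem le_mul_exp_of_le_add_mul_integral (ha : 0 ≤ a) (hc : 0 ≤ c)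
    (hUint : IntervalIntegrable U volume 0 T) (hUC : ∀ t ∈ Icc 0 T, U t ≤ C)
    (hU : ∀ t ∈ Icc 0 T, U t ≤ a + c * ∫ s in (0 : ℝ)..t, U s) :
    ∀ t ∈ Icc 0 T, U t ≤ a * exp (c * t) := by
  -- `n` Picard steps from `U ≤ C` leave the remainder `C (ct)ⁿ / n!`, which tends to `0`.
  have hiter : ∀ n : ℕ, ∀ t ∈ Icc 0 T, U t ≤ a * exp (c * t) + C * ((c * t) ^ n / n !) := by
    intro n
    induction n with
    | zero =>
      intro t ht
      simpa using (hUC t ht).trans (le_add_of_nonneg_left (by positivity))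
    | succ n ih =>
      rintro t ⟨ht0, htT⟩
      calc U t ≤ a + c * ∫ s in (0 : ℝ)..t, U s := hU t ⟨ht0, htT⟩
        _ ≤ a + c * ∫ s in (0 : ℝ)..t, (a * exp (c * s) + C * ((c * s) ^ n / n !)) := by
          gcongr
          refine integral_mono_on ht0 (hUint.mono_set ?_)
            (Continuous.intervalIntegrable (by fun_prop) _ _)
            fun s hs => ih s ⟨hs.1, hs.2.trans htT⟩
          simpa [uIcc_of_le ht0, uIcc_of_le (ht0.trans htT)] using Icc_subset_Icc_right htT
        _ = _ := const_add_mul_integral_mul_exp_add_mul_pow_div_factorial a c C t n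
  intro t ht
  have hlim : Tendsto (fun n : ℕ => a * exp (c * t) + C * ((c * t) ^ n / n !)) atTop
      (𝓝 (a * exp (c * t))) := by
    simpa using tendsto_const_nhds.add
      ((FloorSemiring.tendsto_pow_div_factorial_atTop (c * t)).const_mul C)
  exact ge_of_tendsto' hlim fun n => hiter n t ht

end Gronwall

section RunningSup

noncomputable def runningSup (u : ℝ → ℝ) (t : ℝ) : ℝ :=
  sSup (u '' Icc 0 t)

variable {u : ℝ → ℝ} {s t C : ℝ}

lemma le_runningSup (hbdd : BddAbove (u '' Icc 0 t)) (hs : s ∈ Icc 0 t) :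
    u s ≤ runningSup u t :=
  le_csSup hbdd (mem_image_of_mem u hs)

lemma runningSup_le (ht : 0 ≤ t) (hC : ∀ s ∈ Icc 0 t, u s ≤ C) : runningSup u t ≤ C :=
  csSup_le ((nonempty_Icc.2 ht).image u) (forall_mem_image.2 hC)

lemma runningSup_monotoneOn (hbdd : ∀ t, 0 ≤ t → BddAbove (u '' Icc 0 t)) :
    MonotoneOn (runningSup u) (Ici 0) := fun _ hs _ _ hst =>
  csSup_le_csSup (hbdd _ (le_trans hs hst)) ((nonempty_Icc.2 hs).image u)
    (image_mono (Icc_subset_Icc_right hst))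

lemma intervalIntegrable_runningSup (hbdd : ∀ t, 0 ≤ t → BddAbove (u '' Icc 0 t))
    (ht : 0 ≤ t) : IntervalIntegrable (runningSup u) volume 0 t :=
  ((runningSup_monotoneOn hbdd).mono
    (by simp [uIcc_of_le ht, Icc_subset_Ici_self])).intervalIntegrable

end RunningSup

section Truncation

variable {b : ℝ}

lemma ite_le_self_nonneg (hb : 0 ≤ b) (x : ℝ) : 0 ≤ if b ≤ x then x else 0 := by
  split_ifs with hbx
  exacts [hb.trans hbx, le_rfl]

lemma mul_le_mul_add_ite_mul {k x y : ℝ} (hb : 0 ≤ b) (hx : 0 ≤ x) (hxy : x ≤ y) :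
    k * x ≤ b * x + (if b ≤ k then k else 0) * y := by
  split_ifs with hbk
  · nlinarith
  · nlinarith

lemma IntervalIntegrable.ite_le_self {h : ℝ → ℝ} {t₀ t₁ : ℝ}
    (hh : IntervalIntegrable h volume t₀ t₁) (b : ℝ) :
    IntervalIntegrable (fun s => if b ≤ h s then h s else 0) volume t₀ t₁ := by
  have hφ : Measurable fun x : ℝ => if b ≤ x then x else 0 :=
    Measurable.ite measurableSet_Ici measurable_id measurable_const
  refine hh.mono_fun (hφ.comp_aemeasurable hh.def'.aemeasurable).aestronglyMeasurable
    (ae_of_all _ fun s => ?_)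
  dsimp only
  split_ifs <;> simp

lemma integral_sub_mul_le_add_integral_ite_mul {k u V : ℝ → ℝ} {M t : ℝ} (hb : 0 ≤ b)
    (ht : 0 ≤ t) (hk : IntervalIntegrable k volume 0 t) (hV : IntervalIntegrable V volume 0 t)
    (hu0 : ∀ s ∈ Icc 0 t, 0 ≤ u s) (huV : ∀ s ∈ Icc 0 t, u s ≤ V s)
    (huM : ∀ s ∈ Icc 0 t, u s ≤ M) :
    ∫ s in (0 : ℝ)..t, k (t - s) * u s ≤
      b * (∫ s in (0 : ℝ)..t, V s) + (∫ s in (0 : ℝ)..t, if b ≤ k s then k s else 0) * M := by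
  have hkt :
      IntervalIntegrable (fun s => if b ≤ k (t - s) then k (t - s) else 0) volume 0 t := by
    simpa using ((hk.ite_le_self b).comp_sub_left t).symm
  have hshift : ∫ s in (0 : ℝ)..t, (if b ≤ k (t - s) then k (t - s) else 0) =
      ∫ s in (0 : ℝ)..t, if b ≤ k s then k s else 0 := by
    simpa using
      integral_comp_sub_left (a := 0) (b := t) (fun s => if b ≤ k s then k s else 0) t
  have hbound : ∀ s ∈ Icc 0 t,
      k (t - s) * u s ≤ b * V s + (if b ≤ k (t - s) then k (t - s) else 0) * M := fun s hs =>
    (mul_le_mul_add_ite_mul hb (hu0 s hs) (huM s hs)).trans (by gcongr; exact huV s hs)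
  rw [← hshift, ← intervalIntegral.integral_mul_const, ← intervalIntegral.integral_const_mul,
    ← integral_add (hV.const_mul b) (hkt.mul_const M)]
  by_cases hint : IntervalIntegrable (fun s => k (t - s) * u s) volume 0 t
  · exact integral_mono_on ht hint ((hV.const_mul b).add (hkt.mul_const M)) hbound
  · rw [integral_undef hint]
    refine integral_nonneg ht fun s hs => ?_
    have hVs := (hu0 s hs).trans (huV s hs)
    have hM := (hu0 s hs).trans (huM s hs)
    have := ite_le_self_nonneg hb (k (t - s))
    positivity

end Truncation

lemma runningSup_le_two_mul_add_mul_integral {h u : ℝ → ℝ} {b G T : ℝ} (hb : 0 ≤ b)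
    (hh : IntervalIntegrable h volume 0 T)
    (hsmall : ∫ s in (0 : ℝ)..T, (if b ≤ h s then h s else 0) < 1 / 2)
    (hu0 : ∀ t, 0 ≤ t → 0 ≤ u t) (hbdd : ∀ t, 0 ≤ t → BddAbove (u '' Icc 0 t))
    (hu : ∀ t ∈ Icc 0 T, u t ≤ G + ∫ s in (0 : ℝ)..t, h (t - s) * u s) :
    ∀ t ∈ Icc 0 T,
      runningSup u t ≤ 2 * G + 2 * b * ∫ s in (0 : ℝ)..t, runningSup u s := by
  rintro t ⟨ht0, htT⟩
  set ε := ∫ s in (0 : ℝ)..T, (if b ≤ h s then h s else 0)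
  have hU0 : ∀ s, 0 ≤ s → 0 ≤ runningSup u s := fun s hs =>
    (hu0 0 le_rfl).trans (le_runningSup (hbdd s hs) ⟨le_rfl, hs⟩)
  have hUint := intervalIntegrable_runningSup hbdd ht0
  have hbound :
      runningSup u t ≤
        G + (b * (∫ s in (0 : ℝ)..t, runningSup u s) + ε * runningSup u t) := by
    refine runningSup_le ht0 fun t' ⟨ht'0, ht't⟩ => ?_
    have ht'T := ht't.trans htT
    have hconv := integral_sub_mul_le_add_integral_ite_mul hb ht'0
      (hh.mono_set (by simpa [uIcc_of_le ht'0, uIcc_of_le (ht0.trans htT)] using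
        Icc_subset_Icc_right ht'T))
      (intervalIntegrable_runningSup hbdd ht'0) (fun s hs => hu0 s hs.1)
      (fun s hs => le_runningSup (hbdd s hs.1) ⟨hs.1, le_rfl⟩)
      (fun s hs => le_runningSup (hbdd t ht0) ⟨hs.1, hs.2.trans ht't⟩)
    have hUmono : ∫ s in (0 : ℝ)..t', runningSup u s ≤ ∫ s in (0 : ℝ)..t, runningSup u s :=
      integral_mono_interval le_rfl ht'0 ht't
        (ae_restrict_of_forall_mem measurableSet_Ioc fun s hs => hU0 s hs.1.le) hUint
    have hεmono : ∫ s in (0 : ℝ)..t', (if b ≤ h s then h s else 0) ≤ ε :=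
      integral_mono_interval le_rfl ht'0 ht'T
        (ae_of_all _ fun s => ite_le_self_nonneg hb (h s)) (hh.ite_le_self b)
    calc u t' ≤ G + ∫ s in (0 : ℝ)..t', h (t' - s) * u s := hu t' ⟨ht'0, ht'T⟩
      _ ≤ G + (b * (∫ s in (0 : ℝ)..t', runningSup u s) +
            (∫ s in (0 : ℝ)..t', if b ≤ h s then h s else 0) * runningSup u t) := by gcongr
      _ ≤ G + (b * (∫ s in (0 : ℝ)..t, runningSup u s) + ε * runningSup u t) := by
        have := hU0 t ht0
        gcongr
  nlinarith [mul_nonneg (sub_nonneg.2 hsmall.le) (hU0 t ht0)]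

theorem stmt6_general (T : ℝ) (h g u : ℝ → ℝ)
    (hh_int : ∀ S, 0 ≤ S → IntervalIntegrable h volume 0 S)
    (hg_nonneg : ∀ t, 0 ≤ t → 0 ≤ g t)
    (hg_loc : ∀ S, 0 ≤ S → ∃ C, ∀ t ∈ Set.Icc (0:ℝ) S, g t ≤ C)
    (b : ℝ) (hb : 0 < b)
    (hsmall : ∫ s in (0:ℝ)..T, (if b ≤ h s then h s else 0) < 1 / 2)
    (hu_nonneg : ∀ t, 0 ≤ t → 0 ≤ u t)
    (hu_loc : ∀ S, 0 ≤ S → ∃ C, ∀ t ∈ Set.Icc (0:ℝ) S, u t ≤ C)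
    (hu : ∀ t ∈ Set.Icc (0:ℝ) T, u t ≤ g t + ∫ s in (0:ℝ)..t, h (t - s) * u s) :
    ∀ t ∈ Set.Icc (0:ℝ) T,
      u t ≤ 2 * Real.exp (2 * b * T) * sSup (g '' Set.Icc 0 T) := by
  intro t ht
  have hT : 0 ≤ T := ht.1.trans ht.2
  set G := sSup (g '' Icc 0 T)
  have hgG : ∀ s ∈ Icc 0 T, g s ≤ G := by
    obtain ⟨C, hC⟩ := hg_loc T hT
    exact fun s hs => le_csSup ⟨C, forall_mem_image.2 hC⟩ (mem_image_of_mem g hs)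
  have hG : 0 ≤ G := (hg_nonneg 0 le_rfl).trans (hgG 0 ⟨le_rfl, hT⟩)
  have hbdd : ∀ S, 0 ≤ S → BddAbove (u '' Icc 0 S) := fun S hS =>
    let ⟨C, hC⟩ := hu_loc S hS
    ⟨C, forall_mem_image.2 hC⟩
  have hkey := runningSup_le_two_mul_add_mul_integral hb.le (hh_int T hT) hsmall hu_nonneg hbdd
    fun s hs => (hu s hs).trans (add_le_add_left (hgG s hs) _)
  have hgronwall := le_mul_exp_of_le_add_mul_integral (by positivity) (by positivity)
    (intervalIntegrable_runningSup hbdd hT)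
    (fun s hs => runningSup_monotoneOn hbdd hs.1 hT hs.2) hkey t ht
  calc u t ≤ runningSup u t := le_runningSup (hbdd t ht.1) ⟨ht.1, le_rfl⟩
    _ ≤ 2 * G * exp (2 * b * t) := hgronwall
    _ = 2 * exp (2 * b * t) * G := by ring
    _ ≤ 2 * exp (2 * b * T) * G := by gcongr; exact ht.2

/-- Gronwall-type convolution lemma: if h is nonnegative locally
integrable, g nonnegative locally bounded, b > 0 with ∫_0^T h·1{h ≥ b} < 1/2 and a
locally bounded nonnegative u satisfies u(t) ≤ g(t) + ∫_0^t h(t−s)u(s) ds on [0,T],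
then sup_{t ≤ T} u(t) ≤ 2 e^{2bT} sup_{t ≤ T} g(t). -/
theorem stmt6 (T : ℝ) (hT : 0 ≤ T) (h g u : ℝ → ℝ)
    (hh_nonneg : ∀ t, 0 ≤ t → 0 ≤ h t)
    (hh_int : ∀ S, 0 ≤ S → IntervalIntegrable h volume 0 S)
    (hg_nonneg : ∀ t, 0 ≤ t → 0 ≤ g t)
    (hg_loc : ∀ S, 0 ≤ S → ∃ C, ∀ t ∈ Set.Icc (0:ℝ) S, g t ≤ C)
    (b : ℝ) (hb : 0 < b)
    (hsmall : ∫ s in (0:ℝ)..T, (if b ≤ h s then h s else 0) < 1 / 2)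
    (hu_nonneg : ∀ t, 0 ≤ t → 0 ≤ u t)
    (hu_loc : ∀ S, 0 ≤ S → ∃ C, ∀ t ∈ Set.Icc (0:ℝ) S, u t ≤ C)
    (hu : ∀ t ∈ Set.Icc (0:ℝ) T, u t ≤ g t + ∫ s in (0:ℝ)..t, h (t - s) * u s) :
    ∀ t ∈ Set.Icc (0:ℝ) T,
      u t ≤ 2 * Real.exp (2 * b * T) * sSup (g '' Set.Icc 0 T) :=
  stmt6_general T h g u hh_int hg_nonneg hg_loc b hb hsmall hu_nonneg hu_loc hu
end

section
/- Let T ≥ 0, let h : [0,∞) → [0,∞) be locally integrable, let g : [0,∞) → [0,∞) be locally bounded, and suppose b > 0 satisfies ∫_0^T h(s)·1{h(s) ≥ b} ds < 1/2. Let (u^n)_{n≥0} be a sequence of locally bounded nonnegative functions on [0,∞) satisfying u^{n+1}(t) ≤ g(t) + ∫_0^t h(t−s) u^n(s) ds for all t ∈ [0,T] and all n ≥ 0. Then sup_n sup_{t ≤ T} u^n(t) ≤ 2 e^{2bT} ( sup_{t ≤ T} g(t) + sup_{t ≤ T} u^0(t) ). -/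
/-!
Split the kernel as `h ≤ largePart h b + b`. Against the weight `exp (2 b s)`, the large part,
whose mass on `[0, T]` is below `1/2`, contributes at most `exp (2 b t) / 2` to the convolution,
and the constant `b` contributes `(exp (2 b t) - 1) / 2`. Hence the convolution of `h` with
`D exp (2 b s)` is at most `D exp (2 b t) - D / 2`, so the bound
`u n t ≤ 2 (sup g + sup u 0) exp (2 b t)` passes from `n` to `n + 1`.
-/

open MeasureTheory Real Set intervalIntegral

theorem integral_exp_mul {c : ℝ} (hc : c ≠ 0) (a b : ℝ) :
    ∫ x in a..b, exp (c * x) = (exp (c * b) - exp (c * a)) / c := by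
  rw [integral_comp_mul_left exp hc, integral_exp, smul_eq_mul, inv_mul_eq_div]

theorem le_csSup_image_of_bound {α : Type*} {f : α → ℝ} {s : Set α}
    (hf : ∃ C, ∀ x ∈ s, f x ≤ C) {x : α} (hx : x ∈ s) : f x ≤ sSup (f '' s) := by
  obtain ⟨C, hC⟩ := hf
  exact le_csSup ⟨C, forall_mem_image.2 hC⟩ (mem_image_of_mem f hx)

theorem integral_le_of_le_of_nonneg {f g : ℝ → ℝ} {a b : ℝ} (hab : a ≤ b)
    (hg : IntervalIntegrable g volume a b) (hfg : ∀ x ∈ Icc a b, f x ≤ g x)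
    (hg_nonneg : ∀ x ∈ Icc a b, 0 ≤ g x) :
    ∫ x in a..b, f x ≤ ∫ x in a..b, g x := by
  by_cases hf : IntervalIntegrable f volume a b
  · exact integral_mono_on hab hf hg hfg
  · rw [integral_undef hf]
    exact integral_nonneg hab hg_nonneg

theorem IntervalIntegrable.comp_sub_left_zero {f : ℝ → ℝ} {t : ℝ}
    (hf : IntervalIntegrable f volume 0 t) :
    IntervalIntegrable (fun s => f (t - s)) volume 0 t := by
  simpa using (hf.comp_sub_left t).symm

noncomputable def largePart (h : ℝ → ℝ) (b s : ℝ) : ℝ := if b ≤ h s then h s else 0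

section largePart

variable {h : ℝ → ℝ} {b : ℝ}

theorem largePart_nonneg (hb : 0 ≤ b) (s : ℝ) : 0 ≤ largePart h b s := by
  unfold largePart
  split_ifs with hs
  exacts [hb.trans hs, le_rfl]

theorem le_largePart_add (hb : 0 ≤ b) (s : ℝ) : h s ≤ largePart h b s + b := by
  unfold largePart
  split_ifs with hs <;> linarith

theorem IntervalIntegrable.largePart {a c : ℝ} (hh : IntervalIntegrable h volume a c) :
    IntervalIntegrable (largePart h b) volume a c := by
  have hmeas : Measurable fun x : ℝ => if b ≤ x then x else 0 :=
    Measurable.ite measurableSet_Ici measurable_id measurable_const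
  refine hh.mono_fun (hmeas.comp_aemeasurable hh.def'.aemeasurable).aestronglyMeasurable
    (Filter.Eventually.of_forall fun s => ?_)
  simp only [_root_.largePart]
  split_ifs <;> simp

end largePart

theorem integral_comp_sub_mul_exp_le {h : ℝ → ℝ} {b c t : ℝ} (hb : 0 ≤ b) (hc : 0 < c)
    (ht : 0 ≤ t) (hh : IntervalIntegrable h volume 0 t) :
    ∫ s in 0..t, h (t - s) * exp (c * s)
      ≤ (∫ s in 0..t, largePart h b s) * exp (c * t) + b * (exp (c * t) - 1) / c := by
  have hexp : Continuous fun s => exp (c * s) := by fun_prop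
  calc ∫ s in 0..t, h (t - s) * exp (c * s)
      ≤ ∫ s in 0..t, (largePart h b (t - s) * exp (c * t) + b * exp (c * s)) := by
        refine integral_mono_on ht (hh.comp_sub_left_zero.mul_continuousOn hexp.continuousOn)
          ((hh.largePart.comp_sub_left_zero.mul_const _).add
            (hexp.intervalIntegrable 0 t |>.const_mul b)) fun s hs => ?_
        have hexp_mono : exp (c * s) ≤ exp (c * t) := exp_le_exp.2 (by nlinarith [hs.2])
        nlinarith [le_largePart_add (h := h) hb (t - s), largePart_nonneg (h := h) hb (t - s),
          exp_pos (c * s)]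
    _ = (∫ s in 0..t, largePart h b s) * exp (c * t) + b * (exp (c * t) - 1) / c := by
        rw [integral_add (hh.largePart.comp_sub_left_zero.mul_const _)
          (hexp.intervalIntegrable 0 t |>.const_mul b), intervalIntegral.integral_mul_const,
          intervalIntegral.integral_const_mul, integral_comp_sub_left, integral_exp_mul hc.ne']
        simp [mul_div_assoc]

theorem integral_comp_sub_mul_le_of_le_exp {h v : ℝ → ℝ} {b D t : ℝ} (hb : 0 < b)
    (hD : 0 ≤ D) (ht : 0 ≤ t) (hh_nonneg : ∀ s ∈ Icc 0 t, 0 ≤ h s)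
    (hh : IntervalIntegrable h volume 0 t)
    (hsmall : ∫ s in 0..t, largePart h b s ≤ 1 / 2)
    (hv : ∀ s ∈ Icc 0 t, v s ≤ D * exp (2 * b * s)) :
    ∫ s in 0..t, h (t - s) * v s ≤ D * (exp (2 * b * t) - 1 / 2) := by
  have hts : ∀ s ∈ Icc 0 t, t - s ∈ Icc 0 t := fun s hs =>
    ⟨by linarith [hs.2], by linarith [hs.1]⟩
  calc ∫ s in 0..t, h (t - s) * v s
      ≤ ∫ s in 0..t, h (t - s) * (D * exp (2 * b * s)) :=
        integral_le_of_le_of_nonneg ht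
          (hh.comp_sub_left_zero.mul_continuousOn (by fun_prop))
          (fun s hs => mul_le_mul_of_nonneg_left (hv s hs) (hh_nonneg _ (hts s hs)))
          (fun s hs => mul_nonneg (hh_nonneg _ (hts s hs)) (by positivity))
    _ = D * ∫ s in 0..t, h (t - s) * exp (2 * b * s) := by
        rw [← intervalIntegral.integral_const_mul]
        simp only [mul_left_comm]
    _ ≤ D * ((1 / 2) * exp (2 * b * t) + b * (exp (2 * b * t) - 1) / (2 * b)) := by
        gcongr
        refine (integral_comp_sub_mul_exp_le hb.le (by positivity) ht hh).trans ?_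
        gcongr
    _ = D * (exp (2 * b * t) - 1 / 2) := by
        field_simp
        ring

theorem le_mul_exp_of_le_add_convolution {T b Cg Cu : ℝ} {h g : ℝ → ℝ} {u : ℕ → ℝ → ℝ}
    (hh_nonneg : ∀ t ∈ Icc 0 T, 0 ≤ h t) (hh : IntervalIntegrable h volume 0 T) (hb : 0 < b)
    (hsmall : ∫ s in 0..T, largePart h b s ≤ 1 / 2)
    (hg : ∀ t ∈ Icc 0 T, g t ≤ Cg) (hCg : 0 ≤ Cg) (hu₀ : ∀ t ∈ Icc 0 T, u 0 t ≤ Cu)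
    (hCu : 0 ≤ Cu)
    (hu : ∀ n, ∀ t ∈ Icc 0 T, u (n + 1) t ≤ g t + ∫ s in 0..t, h (t - s) * u n s) :
    ∀ n, ∀ t ∈ Icc 0 T, u n t ≤ 2 * (Cg + Cu) * exp (2 * b * t) := by
  intro n
  induction n with
  | zero =>
    intro t ht
    have : 1 ≤ exp (2 * b * t) := one_le_exp (by nlinarith [ht.1])
    nlinarith [hu₀ t ht]
  | succ n ih =>
    intro t ht
    have hsub : Icc 0 t ⊆ Icc 0 T := Icc_subset_Icc_right ht.2
    have hsmall_t : ∫ s in 0..t, largePart h b s ≤ 1 / 2 :=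
      (integral_mono_interval le_rfl ht.1 ht.2
        (Filter.Eventually.of_forall (largePart_nonneg hb.le)) hh.largePart).trans hsmall
    have hh_t : IntervalIntegrable h volume 0 t :=
      hh.mono_set (by rwa [uIcc_of_le ht.1, uIcc_of_le (ht.1.trans ht.2)])
    have hconv := integral_comp_sub_mul_le_of_le_exp hb (by positivity) ht.1
      (fun s hs => hh_nonneg s (hsub hs)) hh_t hsmall_t (fun s hs => ih s (hsub hs))
    linarith [hu n t ht, hg t ht]

/-- Gronwall-type convolution lemma for sequences: if a sequence of
locally bounded nonnegative functions satisfies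
u^{n+1}(t) ≤ g(t) + ∫_0^t h(t−s)u^n(s) ds on [0,T], then
sup_n sup_{t ≤ T} u^n(t) ≤ 2 e^{2bT} (sup_{t ≤ T} g(t) + sup_{t ≤ T} u^0(t)). -/
theorem stmt7 (T : ℝ) (hT : 0 ≤ T) (h g : ℝ → ℝ) (u : ℕ → ℝ → ℝ)
    (hh_nonneg : ∀ t, 0 ≤ t → 0 ≤ h t)
    (hh_int : ∀ S, 0 ≤ S → IntervalIntegrable h volume 0 S)
    (hg_nonneg : ∀ t, 0 ≤ t → 0 ≤ g t)
    (hg_loc : ∀ S, 0 ≤ S → ∃ C, ∀ t ∈ Set.Icc (0:ℝ) S, g t ≤ C)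
    (b : ℝ) (hb : 0 < b)
    (hsmall : ∫ s in (0:ℝ)..T, (if b ≤ h s then h s else 0) < 1 / 2)
    (hu_nonneg : ∀ n t, 0 ≤ t → 0 ≤ u n t)
    (hu_loc : ∀ n S, 0 ≤ S → ∃ C, ∀ t ∈ Set.Icc (0:ℝ) S, u n t ≤ C)
    (hu : ∀ n, ∀ t ∈ Set.Icc (0:ℝ) T,
      u (n + 1) t ≤ g t + ∫ s in (0:ℝ)..t, h (t - s) * u n s) :
    ∀ n, ∀ t ∈ Set.Icc (0:ℝ) T,
      u n t ≤ 2 * Real.exp (2 * b * T) *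
        (sSup (g '' Set.Icc 0 T) + sSup (u 0 '' Set.Icc 0 T)) := by
  have hg_le : ∀ t ∈ Icc 0 T, g t ≤ sSup (g '' Icc 0 T) := fun _ =>
    le_csSup_image_of_bound (hg_loc T hT)
  have hu₀_le : ∀ t ∈ Icc 0 T, u 0 t ≤ sSup (u 0 '' Icc 0 T) := fun _ =>
    le_csSup_image_of_bound (hu_loc 0 T hT)
  have h0 : (0 : ℝ) ∈ Icc 0 T := ⟨le_rfl, hT⟩
  have hCg := (hg_nonneg 0 le_rfl).trans (hg_le 0 h0)
  have hCu := (hu_nonneg 0 0 le_rfl).trans (hu₀_le 0 h0)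
  intro n t ht
  calc u n t ≤ 2 * (sSup (g '' Icc 0 T) + sSup (u 0 '' Icc 0 T)) * exp (2 * b * t) :=
        le_mul_exp_of_le_add_convolution (fun t ht => hh_nonneg t ht.1) (hh_int T hT) hb
          hsmall.le hg_le hCg hu₀_le hCu hu n t ht
    _ ≤ 2 * (sSup (g '' Icc 0 T) + sSup (u 0 '' Icc 0 T)) * exp (2 * b * T) := by
        gcongr
        exact ht.2
    _ = _ := by ring
end
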